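/- Let (u, ρ) be a smooth solution of the periodic two-component μ-Hunter-Saxton system on [0,∞). Then for all t ≥ 0 and x ∈ ℝ, ∂_t(u_x² + ρ²)(t,x) − ∂_x((u(t,x)+γ)(u_x(t,x)² + ρ(t,x)²)) = −4μ₀ u(t,x) u_x(t,x) + 4μ₀² u_x(t,x) + μ₁² u_x(t,x). -/

import Mathlib

/-!
Integrating the momentum equation over a period kills every term except `μ'`, so the mean
`μ(t) = ∫ u(t)` is conserved. The momentum equation is then an exact `x`-derivative, and
integrating it once in `x` gives `uₜₓ = -2μ₀u + uₓ²/2 + u uₓₓ - ρ²/2 + γuₓₓ + c(t)`; integrating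
`∂ₓ(uₜ - (u + γ)uₓ)` over a period identifies `c(t) = 2μ₀² + E(t)/2` with `E(t) = ∫ (uₓ² + ρ²)`.
Substituting this and the density equation into `∂ₜ(uₓ² + ρ²)` gives the identity with `E(t)` in
place of `μ₁²`. Its right-hand side is again the `x`-derivative of a periodic function, so
integrating over a period shows that `E` is conserved: `E(t) = E(0) = μ₁²`.
-/

open MeasureTheory Real Set Filter Function
open scoped ContDiff

section Calculus

variable {F : Type*} [NormedAddCommGroup F] [NormedSpace ℝ F] {f : ℝ → ℝ → F} {m n : WithTop ℕ∞}

theorem HasFDerivAt.hasDerivAt_curry_apply {L : ℝ × ℝ →L[ℝ] F} {t x : ℝ}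
    (hf : HasFDerivAt (uncurry f) L (t, x)) : HasDerivAt (f t) (L (0, 1)) x :=
  hf.comp_hasDerivAt (f := fun y => (t, y)) x ((hasDerivAt_const x t).prodMk (hasDerivAt_id x))

theorem HasFDerivAt.hasDerivAt_curry_flip_apply {L : ℝ × ℝ →L[ℝ] F} {t x : ℝ}
    (hf : HasFDerivAt (uncurry f) L (t, x)) : HasDerivAt (fun s => f s x) (L (1, 0)) t :=
  hf.comp_hasDerivAt (f := fun s => (s, x)) t ((hasDerivAt_id t).prodMk (hasDerivAt_const t x))

theorem ContDiff.curry_apply (hf : ContDiff ℝ n (uncurry f)) (t : ℝ) : ContDiff ℝ n (f t) :=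
  hf.comp (contDiff_const.prodMk contDiff_id)

theorem ContDiff.uncurry_flip (hf : ContDiff ℝ n (uncurry f)) : ContDiff ℝ n (uncurry (flip f)) :=
  hf.comp (contDiff_snd.prodMk contDiff_fst)

theorem ContDiff.curry_flip_apply (hf : ContDiff ℝ n (uncurry f)) (x : ℝ) :
    ContDiff ℝ n (fun s => f s x) :=
  hf.uncurry_flip.curry_apply x

theorem ContDiff.hasDerivAt_curry_apply (hf : ContDiff ℝ n (uncurry f)) (hn : n ≠ 0) (t x : ℝ) :
    HasDerivAt (f t) (deriv (f t) x) x :=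
  ((hf.curry_apply t).differentiable hn x).hasDerivAt

theorem ContDiff.hasDerivAt_curry_flip_apply (hf : ContDiff ℝ n (uncurry f)) (hn : n ≠ 0)
    (t x : ℝ) : HasDerivAt (fun s => f s x) (deriv (fun s => f s x) t) t :=
  ((hf.curry_flip_apply x).differentiable hn t).hasDerivAt

theorem ContDiff.uncurry_deriv_snd (hf : ContDiff ℝ n (uncurry f)) (hmn : m + 1 ≤ n) :
    ContDiff ℝ m (uncurry fun t x => deriv (f t) x) := by
  have hderiv : (uncurry fun t x => deriv (f t) x) = fun p => fderiv ℝ (f p.1) p.2 1 := by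
    ext p
    exact fderiv_apply_one_eq_deriv.symm
  rw [hderiv]
  exact ContDiff.fderiv_apply (f := fun p : ℝ × ℝ => f p.1)
    (hf.comp (contDiff_fst.fst.prodMk contDiff_snd)) contDiff_snd contDiff_const hmn

theorem ContDiff.uncurry_deriv_fst (hf : ContDiff ℝ n (uncurry f)) (hmn : m + 1 ≤ n) :
    ContDiff ℝ m (uncurry fun t x => deriv (fun s => f s x) t) :=
  (hf.uncurry_flip.uncurry_deriv_snd hmn).uncurry_flip

theorem ContDiff.deriv_deriv_comm (hf : ContDiff ℝ 2 (uncurry f)) (t x : ℝ) :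
    deriv (fun y => deriv (fun s => f s y) t) x = deriv (fun s => deriv (f s) x) t := by
  have hdiff : Differentiable ℝ (uncurry f) := hf.differentiable two_ne_zero
  have hD : HasFDerivAt (fderiv ℝ (uncurry f)) (fderiv ℝ (fderiv ℝ (uncurry f)) (t, x)) (t, x) :=
    ((hf.fderiv_right (m := 1) le_rfl).differentiable one_ne_zero _).hasFDerivAt
  have hleft : (fun y => deriv (fun s => f s y) t) = fun y => fderiv ℝ (uncurry f) (t, y) (1, 0) :=
    funext fun y => (hdiff (t, y)).hasFDerivAt.hasDerivAt_curry_flip_apply.deriv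
  have hright : (fun s => deriv (f s) x) = fun s => fderiv ℝ (uncurry f) (s, x) (0, 1) :=
    funext fun s => (hdiff (s, x)).hasFDerivAt.hasDerivAt_curry_apply.deriv
  rw [hleft, hright,
    ((hD.hasDerivAt_curry_apply (f := fun s y => fderiv ℝ (uncurry f) (s, y))).clm_apply
      (hasDerivAt_const x ((1 : ℝ), (0 : ℝ)))).deriv,
    ((hD.hasDerivAt_curry_flip_apply (f := fun s y => fderiv ℝ (uncurry f) (s, y))).clm_apply
      (hasDerivAt_const t ((0 : ℝ), (1 : ℝ)))).deriv]
  simpa using hf.contDiffAt.isSymmSndFDerivAt (by simp) (0, 1) (1, 0)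

theorem ContDiff.hasDerivAt_intervalIntegral [CompleteSpace F] (hf : ContDiff ℝ 1 (uncurry f))
    (a b t : ℝ) :
    HasDerivAt (fun s => ∫ y in a..b, f s y) (∫ y in a..b, deriv (fun s => f s y) t) t := by
  have hf' : Continuous (uncurry fun s y => deriv (fun s => f s y) s) :=
    (hf.uncurry_deriv_fst (m := 0) le_rfl).continuous
  obtain ⟨C, hC⟩ := (isCompact_closedBall t 1).prod (isCompact_uIcc (a := a) (b := b))
    |>.exists_bound_of_continuousOn hf'.continuousOn
  refine (intervalIntegral.hasDerivAt_integral_of_dominated_loc_of_deriv_le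
    (bound := fun _ => C) (Metric.ball_mem_nhds t one_pos)
    (.of_forall fun s => (hf.curry_apply s).continuous.aestronglyMeasurable)
    ((hf.curry_apply t).continuous.intervalIntegrable a b)
    (hf'.comp (continuous_const.prodMk continuous_id)).aestronglyMeasurable
    (.of_forall fun y hy s hs => hC (s, y) ⟨Metric.ball_subset_closedBall hs, uIoc_subset_uIcc hy⟩)
    intervalIntegrable_const
    (.of_forall fun y _ s _ => hf.hasDerivAt_curry_flip_apply one_ne_zero s y)).2

theorem Function.Periodic.deriv {g : ℝ → F} {T : ℝ} (h : Periodic g T) : Periodic (deriv g) T :=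
  fun x => by rw [← deriv_comp_add_const, h.funext]

theorem Function.Periodic.intervalIntegral_eq_zero_of_hasDerivAt [CompleteSpace F]
    {g g' : ℝ → F} {T : ℝ} (h : Periodic g T) (hg : ∀ x, HasDerivAt g (g' x) x)
    (hg' : Continuous g') : ∫ x in (0 : ℝ)..T, g' x = 0 := by
  rw [intervalIntegral.integral_eq_sub_of_hasDerivAt (fun x _ => hg x) (hg'.intervalIntegrable _ _),
    ← zero_add T, h 0, sub_self]

theorem eq_of_hasDerivAt_eq_zero_of_le {g : ℝ → F} {a : ℝ} (hg : ∀ s, a ≤ s → HasDerivAt g 0 s)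
    {t : ℝ} (ht : a ≤ t) : g t = g a :=
  constant_of_has_deriv_right_zero (fun s hs => (hg s hs.1).continuousAt.continuousWithinAt)
    (fun s hs => (hg s hs.1).hasDerivWithinAt) t ⟨ht, le_rfl⟩

end Calculus

noncomputable section

def spatialMean (u : ℝ → ℝ → ℝ) (t : ℝ) : ℝ := ∫ y in (0:ℝ)..1, u t y

def energy (u ρ : ℝ → ℝ → ℝ) (t : ℝ) : ℝ := ∫ y in (0:ℝ)..1, (deriv (u t) y ^ 2 + ρ t y ^ 2)

/-- A primitive in `x` of minus the right-hand side of the momentum equation, when `μ` is the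
spatial mean of `u t`: the equation then says `∂ₓ (uₜₓ - momentumPotential) = μ'`. -/
def momentumPotential (γ μ : ℝ) (u ρ : ℝ → ℝ → ℝ) (t x : ℝ) : ℝ :=
  -2 * μ * u t x + deriv (u t) x ^ 2 / 2 + u t x * deriv (deriv (u t)) x - ρ t x ^ 2 / 2
    + γ * deriv (deriv (u t)) x

end

structure IsMuHSSolution (γ : ℝ) (u ρ : ℝ → ℝ → ℝ) : Prop where
  contDiff_u : ContDiff ℝ ∞ (uncurry u)
  contDiff_ρ : ContDiff ℝ ∞ (uncurry ρ)
  periodic_u : ∀ t, Periodic (u t) 1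
  periodic_ρ : ∀ t, Periodic (ρ t) 1
  momentum : ∀ t x : ℝ, 0 ≤ t →
    deriv (spatialMean u) t - deriv (fun s => deriv (deriv (u s)) x) t
      = 2 * spatialMean u t * deriv (u t) x - 2 * deriv (u t) x * deriv (deriv (u t)) x
        - u t x * deriv (deriv (deriv (u t))) x + ρ t x * deriv (ρ t) x
        - γ * deriv (deriv (deriv (u t))) x
  density : ∀ t x : ℝ, 0 ≤ t →
    deriv (fun s => ρ s x) t = deriv (fun y => ρ t y * u t y) x + γ * deriv (ρ t) x

namespace IsMuHSSolution

variable {γ : ℝ} {u ρ : ℝ → ℝ → ℝ}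

theorem contDiff_ux (hs : IsMuHSSolution γ u ρ) :
    ContDiff ℝ ∞ (uncurry fun t x => deriv (u t) x) :=
  hs.contDiff_u.uncurry_deriv_snd (by simp)

theorem contDiff_uxx (hs : IsMuHSSolution γ u ρ) :
    ContDiff ℝ ∞ (uncurry fun t x => deriv (deriv (u t)) x) :=
  hs.contDiff_ux.uncurry_deriv_snd (by simp)

theorem contDiff_utx (hs : IsMuHSSolution γ u ρ) :
    ContDiff ℝ ∞ (uncurry fun t x => deriv (fun s => deriv (u s) x) t) :=
  hs.contDiff_ux.uncurry_deriv_fst (by simp)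

theorem contDiff_energyDensity (hs : IsMuHSSolution γ u ρ) :
    ContDiff ℝ ∞ (uncurry fun t x => deriv (u t) x ^ 2 + ρ t x ^ 2) :=
  (hs.contDiff_ux.pow 2).add (hs.contDiff_ρ.pow 2)

theorem periodic_ux (hs : IsMuHSSolution γ u ρ) (t : ℝ) : Periodic (deriv (u t)) 1 :=
  (hs.periodic_u t).deriv

theorem hasDerivAt_momentumPotential (hs : IsMuHSSolution γ u ρ) (μ t x : ℝ) :
    HasDerivAt (momentumPotential γ μ u ρ t)
      (-2 * μ * deriv (u t) x + 2 * deriv (u t) x * deriv (deriv (u t)) x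
        + u t x * deriv (deriv (deriv (u t))) x - ρ t x * deriv (ρ t) x
        + γ * deriv (deriv (deriv (u t))) x) x := by
  have hu := hs.contDiff_u.hasDerivAt_curry_apply (by simp) t x
  have hux := hs.contDiff_ux.hasDerivAt_curry_apply (by simp) t x
  have huxx := hs.contDiff_uxx.hasDerivAt_curry_apply (by simp) t x
  have hρ := hs.contDiff_ρ.hasDerivAt_curry_apply (by simp) t x
  refine (((((hu.const_mul (-2 * μ)).add ((hux.pow 2).div_const 2)).add (hu.mul huxx)).sub
    ((hρ.pow 2).div_const 2)).add (huxx.const_mul γ)).congr_deriv ?_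
  ring

theorem hasDerivAt_utx_sub_momentumPotential (hs : IsMuHSSolution γ u ρ) {t : ℝ} (ht : 0 ≤ t)
    (x : ℝ) :
    HasDerivAt
      (fun y => deriv (fun s => deriv (u s) y) t - momentumPotential γ (spatialMean u t) u ρ t y)
      (deriv (spatialMean u) t) x := by
  have hutx := hs.contDiff_utx.hasDerivAt_curry_apply (by simp) t x
  rw [(contDiff_infty.1 hs.contDiff_ux 2).deriv_deriv_comm] at hutx
  eta_reduce at hutx
  refine (hutx.sub (hs.hasDerivAt_momentumPotential (spatialMean u t) t x)).congr_deriv ?_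
  linear_combination -hs.momentum t x ht

theorem periodic_utx_sub_momentumPotential (hs : IsMuHSSolution γ u ρ) (μ t : ℝ) :
    Periodic (fun y => deriv (fun s => deriv (u s) y) t - momentumPotential γ μ u ρ t y) 1 := by
  intro y
  simp only [momentumPotential, hs.periodic_u t y, hs.periodic_ρ t y, hs.periodic_ux _ y,
    (hs.periodic_ux t).deriv y]

theorem deriv_spatialMean_eq_zero (hs : IsMuHSSolution γ u ρ) {t : ℝ} (ht : 0 ≤ t) :
    deriv (spatialMean u) t = 0 := by
  simpa using (hs.periodic_utx_sub_momentumPotential _ t).intervalIntegral_eq_zero_of_hasDerivAt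
    (hs.hasDerivAt_utx_sub_momentumPotential ht) continuous_const

theorem spatialMean_eq (hs : IsMuHSSolution γ u ρ) {t : ℝ} (ht : 0 ≤ t) :
    spatialMean u t = spatialMean u 0 := by
  refine eq_of_hasDerivAt_eq_zero_of_le (fun s hs' => ?_) ht
  rw [← hs.deriv_spatialMean_eq_zero hs']
  exact ((contDiff_infty.1 hs.contDiff_u 1).hasDerivAt_intervalIntegral 0 1 s).differentiableAt
    |>.hasDerivAt

theorem exists_utx_eq_momentumPotential_add (hs : IsMuHSSolution γ u ρ) {t : ℝ} (ht : 0 ≤ t) :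
    ∃ c, ∀ x,
      deriv (fun s => deriv (u s) x) t = momentumPotential γ (spatialMean u 0) u ρ t x + c := by
  have hderiv := hs.hasDerivAt_utx_sub_momentumPotential ht
  rw [hs.deriv_spatialMean_eq_zero ht, hs.spatialMean_eq ht] at hderiv
  refine ⟨_, fun x => eq_add_of_sub_eq' (is_const_of_deriv_eq_zero
    (fun y => (hderiv y).differentiableAt) (fun y => (hderiv y).deriv) x 0)⟩

theorem hasDerivAt_ut_sub_flux (hs : IsMuHSSolution γ u ρ) (t x : ℝ) :
    HasDerivAt (fun y => deriv (fun s => u s y) t - (u t y + γ) * deriv (u t) y)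
      (deriv (fun s => deriv (u s) x) t
        - (deriv (u t) x ^ 2 + (u t x + γ) * deriv (deriv (u t)) x)) x := by
  have hut :=
    (hs.contDiff_u.uncurry_deriv_fst (m := ∞) (by simp)).hasDerivAt_curry_apply (by simp) t x
  rw [(contDiff_infty.1 hs.contDiff_u 2).deriv_deriv_comm] at hut
  have hu := hs.contDiff_u.hasDerivAt_curry_apply (by simp) t x
  have hux := hs.contDiff_ux.hasDerivAt_curry_apply (by simp) t x
  exact (hut.sub ((hu.add_const γ).mul hux)).congr_deriv (by ring)

theorem utx_eq_momentumPotential_add_energy (hs : IsMuHSSolution γ u ρ) {t : ℝ} (ht : 0 ≤ t)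
    (x : ℝ) :
    deriv (fun s => deriv (u s) x) t = momentumPotential γ (spatialMean u 0) u ρ t x
      + 2 * spatialMean u 0 ^ 2 + energy u ρ t / 2 := by
  set μ := spatialMean u 0
  obtain ⟨c, hc⟩ := hs.exists_utx_eq_momentumPotential_add ht
  have hper : Periodic (fun y => deriv (fun s => u s y) t - (u t y + γ) * deriv (u t) y) 1 := by
    intro y
    simp only [hs.periodic_u _ y, hs.periodic_ux t y]
  have hu : Continuous (u t) := (hs.contDiff_u.curry_apply t).continuous
  have he : Continuous fun y => deriv (u t) y ^ 2 + ρ t y ^ 2 :=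
    (hs.contDiff_energyDensity.curry_apply t).continuous
  have hint := hper.intervalIntegral_eq_zero_of_hasDerivAt
    (g' := fun y => c - 2 * μ * u t y - (deriv (u t) y ^ 2 + ρ t y ^ 2) / 2)
    (fun y => (hs.hasDerivAt_ut_sub_flux t y).congr_deriv (by
      rw [hc]; unfold momentumPotential; ring)) (by fun_prop)
  have hu_int : IntervalIntegrable (fun y => 2 * μ * u t y) volume 0 1 :=
    (hu.const_mul _).intervalIntegrable _ _
  have hmean : ∫ y in (0:ℝ)..1, u t y = μ := hs.spatialMean_eq ht
  rw [intervalIntegral.integral_sub (intervalIntegrable_const.sub hu_int)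
      ((he.div_const _).intervalIntegrable _ _),
    intervalIntegral.integral_sub intervalIntegrable_const hu_int, intervalIntegral.integral_const,
    intervalIntegral.integral_const_mul, intervalIntegral.integral_div, hmean, sub_zero,
    one_smul] at hint
  rw [hc, energy]
  linear_combination hint

theorem energy_flux_identity (hs : IsMuHSSolution γ u ρ) {t : ℝ} (ht : 0 ≤ t) (x : ℝ) :
    deriv (fun s => deriv (u s) x ^ 2 + ρ s x ^ 2) t
        - deriv (fun y => (u t y + γ) * (deriv (u t) y ^ 2 + ρ t y ^ 2)) x
      = deriv (u t) x
          * (-4 * spatialMean u 0 * u t x + 4 * spatialMean u 0 ^ 2 + energy u ρ t) := by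
  have hux_t := hs.contDiff_ux.hasDerivAt_curry_flip_apply (by simp) t x
  have hρ_t := hs.contDiff_ρ.hasDerivAt_curry_flip_apply (by simp) t x
  have hu := hs.contDiff_u.hasDerivAt_curry_apply (by simp) t x
  have hux := hs.contDiff_ux.hasDerivAt_curry_apply (by simp) t x
  have hρ := hs.contDiff_ρ.hasDerivAt_curry_apply (by simp) t x
  eta_reduce at hux
  rw [((hux_t.fun_pow 2).fun_add (hρ_t.fun_pow 2)).deriv,
    ((hu.add_const γ).fun_mul ((hux.fun_pow 2).fun_add (hρ.fun_pow 2))).deriv,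
    hs.utx_eq_momentumPotential_add_energy ht, hs.density t x ht, (hρ.fun_mul hu).deriv]
  unfold momentumPotential
  ring

theorem integral_deriv_energyDensity_eq_zero (hs : IsMuHSSolution γ u ρ) {t : ℝ} (ht : 0 ≤ t) :
    ∫ y in (0:ℝ)..1, deriv (fun s => deriv (u s) y ^ 2 + ρ s y ^ 2) t = 0 := by
  set μ := spatialMean u 0
  have hper : Periodic (fun y => (u t y + γ) * (deriv (u t) y ^ 2 + ρ t y ^ 2) - 2 * μ * u t y ^ 2
      + (4 * μ ^ 2 + energy u ρ t) * u t y) 1 := by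
    intro y
    simp only [hs.periodic_u t y, hs.periodic_ux t y, hs.periodic_ρ t y]
  refine hper.intervalIntegral_eq_zero_of_hasDerivAt (fun y => ?_)
    ((hs.contDiff_energyDensity.uncurry_deriv_fst (m := 0) (by simp)).curry_apply t).continuous
  have hu := hs.contDiff_u.hasDerivAt_curry_apply (by simp) t y
  have hux := hs.contDiff_ux.hasDerivAt_curry_apply (by simp) t y
  have hρ := hs.contDiff_ρ.hasDerivAt_curry_apply (by simp) t y
  eta_reduce at hux
  have hflux := (hu.add_const γ).fun_mul ((hux.fun_pow 2).fun_add (hρ.fun_pow 2))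
  have hidentity := hs.energy_flux_identity ht y
  rw [hflux.deriv] at hidentity
  refine ((hflux.sub ((hu.fun_pow 2).const_mul (2 * μ))).add (hu.const_mul _)).congr_deriv ?_
  linear_combination -hidentity

theorem energy_eq (hs : IsMuHSSolution γ u ρ) {t : ℝ} (ht : 0 ≤ t) :
    energy u ρ t = energy u ρ 0 := by
  refine eq_of_hasDerivAt_eq_zero_of_le (fun s hs' => ?_) ht
  rw [← hs.integral_deriv_energyDensity_eq_zero hs']
  exact (contDiff_infty.1 hs.contDiff_energyDensity 1).hasDerivAt_intervalIntegral 0 1 s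

end IsMuHSSolution

theorem stmt_13
    (γ : ℝ) (u ρ : ℝ → ℝ → ℝ) (μ₀ μ₁ : ℝ)
    (hu : ContDiff ℝ (⊤ : ℕ∞) (Function.uncurry u))
    (hρ : ContDiff ℝ (⊤ : ℕ∞) (Function.uncurry ρ))
    (huper : ∀ t x : ℝ, u t (x + 1) = u t x)
    (hρper : ∀ t x : ℝ, ρ t (x + 1) = ρ t x)
    (heq1 : ∀ t x : ℝ, 0 ≤ t →
      deriv (fun s => ∫ y in (0:ℝ)..1, u s y) t
        - deriv (fun s => deriv (deriv (u s)) x) t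
      = 2 * (∫ y in (0:ℝ)..1, u t y) * deriv (u t) x
        - 2 * deriv (u t) x * deriv (deriv (u t)) x
        - u t x * deriv (deriv (deriv (u t))) x
        + ρ t x * deriv (ρ t) x
        - γ * deriv (deriv (deriv (u t))) x)
    (heq2 : ∀ t x : ℝ, 0 ≤ t →
      deriv (fun s => ρ s x) t
      = deriv (fun y => ρ t y * u t y) x + γ * deriv (ρ t) x)
    (hμ₀ : μ₀ = ∫ y in (0:ℝ)..1, u 0 y)
    (hμ₁ : μ₁ = Real.sqrt (∫ y in (0:ℝ)..1, ((deriv (u 0) y) ^ 2 + (ρ 0 y) ^ 2)))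
    : ∀ t x : ℝ, 0 ≤ t →
      deriv (fun s => (deriv (u s) x) ^ 2 + (ρ s x) ^ 2) t
        - deriv (fun y => (u t y + γ) * ((deriv (u t) y) ^ 2 + (ρ t y) ^ 2)) x
      = -(4 * μ₀) * u t x * deriv (u t) x + 4 * μ₀ ^ 2 * deriv (u t) x + μ₁ ^ 2 * deriv (u t) x := by
  have hs : IsMuHSSolution γ u ρ := ⟨hu, hρ, huper, hρper, heq1, heq2⟩
  intro t x ht
  have hμ : spatialMean u 0 = μ₀ := hμ₀.symm
  have hE : energy u ρ t = μ₁ ^ 2 := by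
    rw [hs.energy_eq ht, hμ₁, sq_sqrt (intervalIntegral.integral_nonneg zero_le_one
      fun y _ => by positivity)]
    rfl
  rw [hs.energy_flux_identity ht x, hμ, hE]
  ring
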